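/- Let M = ℂ[a^+(−m−1/2), a^−(−m−1/2) : m ∈ ℤ≥0] be the polynomial algebra in the doubly-indexed variables, graded by charge (a^+ variables have charge +1, a^− variables charge −1) and by weight (variable a^±(−m−1/2) has weight m+1/2). Then the Hilbert–Poincaré series of the charge-zero subalgebra M₀ equals (1/(q)_∞) Σ_{k≥0} q^{k²+k}/((q)_k)². Here M₀ is spanned by monomials with equally many a^+ and a^− factors, and the weight of a monomial a^+(−n_1−1/2)⋯a^+(−n_r−1/2)a^−(−k_1−1/2)⋯a^−(−k_r−1/2) is Σ(n_i+1/2)+Σ(k_j+1/2) with n_1 ≥ ⋯ ≥ n_r ≥ 0, k_1 ≥ ⋯ ≥ k_r ≥ 0 (repetitions allowed). -/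

import Mathlib

/- Hilbert–Poincaré series of the charge-zero subalgebra M₀ of the commutative
   algebra M = ℂ[a^±(−m−1/2) : m ≥ 0]:
       Σ_w dim M₀(w) q^w = (1/(q)_∞) Σ_{k≥0} q^{k²+k}/((q)_k)².
   A basis of M₀(w) is given by the monomials
   a⁺(−n₁−1/2)⋯a⁺(−n_r−1/2)a⁻(−k₁−1/2)⋯a⁻(−k_r−1/2) with
   n₁ ≥ ⋯ ≥ n_r ≥ 0, k₁ ≥ ⋯ ≥ k_r ≥ 0 (repetitions allowed) and weight
   Σ(nᵢ+1/2)+Σ(kⱼ+1/2) = Σnᵢ + Σkⱼ + r = w, i.e. by pairs of multisets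
   (A, B) over ℤ≥0 with |A| = |B| and A.sum + B.sum + |A| = w.
   Stated coefficientwise: replacing (q)_∞ by (q)_{N+1} and truncating the sum
   at k ≤ N does not affect the coefficient of q^N. -/

open PowerSeries Finset

/-- `(q)_k = ∏_{i=1}^k (1 - q^i)` in `ℚ[[q]]`. -/
noncomputable def qPoch (k : ℕ) : PowerSeries ℚ :=
  ∏ i ∈ Finset.range k, (1 - (PowerSeries.X : PowerSeries ℚ) ^ (i + 1))

/-- The dimension of the weight-`w` subspace of `M₀`: the number of pairs of
multisets over ℤ≥0 of equal cardinality `r` with total weight `w`. -/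
noncomputable def dimM0 (w : ℕ) : ℕ :=
  Nat.card {p : Multiset ℕ × Multiset ℕ //
    Multiset.card p.1 = Multiset.card p.2 ∧
      p.1.sum + p.2.sum + Multiset.card p.1 = w}

/-!
The Hilbert series is `Σ_r q^r / (q)_r²`, since `1/(q)_r` generates the multisets of size `r`
over `ℕ` by their sum (either the multiset contains `0`, or every element can
be lowered by one). The Durfee-square identity `1/(q)_r² = Σ_k q^{k²} / ((q)_k² (q)_{r-k})`
turns this into `Σ_k q^{k²+k}/(q)_k² · Σ_i q^i/(q)_i`, and Euler's `Σ_{i ≤ m} q^i/(q)_i = 1/(q)_m`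
makes the inner sum `1/(q)_∞` up to the order `q^N` that matters.
-/

section WeightSeries

variable (R : Type*) [CommSemiring R] {α β : Type*}

noncomputable def weightSeries (w : α → ℕ) : R⟦X⟧ :=
  PowerSeries.mk fun n => (Nat.card {a // w a = n} : R)

variable {R}

theorem coeff_weightSeries (w : α → ℕ) (n : ℕ) :
    coeff n (weightSeries R w) = Nat.card {a // w a = n} :=
  coeff_mk _ _

theorem weightSeries_congr {v : α → ℕ} {w : β → ℕ} (e : α ≃ β) (h : ∀ a, w (e a) = v a) :
    weightSeries R v = weightSeries R w := by
  ext n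
  simp only [coeff_weightSeries]
  exact congrArg _ (Nat.card_congr (e.subtypeEquiv fun a => by rw [h]))

theorem weightSeries_add_const (w : α → ℕ) (c : ℕ) :
    weightSeries R (fun a => w a + c) = X ^ c * weightSeries R w := by
  ext n
  rw [coeff_X_pow_mul', coeff_weightSeries]
  split_ifs with hc
  · rw [coeff_weightSeries]
    exact congrArg _ (Nat.card_congr (Equiv.subtypeEquivRight fun a => by omega))
  · have : IsEmpty {a // w a + c = n} := ⟨fun a => by omega⟩
    simp

theorem weightSeries_eq_add_compl (w : α → ℕ) [∀ n, Finite {a // w a = n}] (p : α → Prop) :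
    weightSeries R w =
      weightSeries R (fun a : {a // p a} => w a) +
        weightSeries R (fun a : {a // ¬p a} => w a) := by
  ext n
  simp only [map_add, coeff_weightSeries]
  classical
  let e : {a // w a = n} ≃ {a : {a // p a} // w a = n} ⊕ {a : {a // ¬p a} // w a = n} :=
    ((Equiv.sumCompl p).subtypeEquiv (q := fun a => w a = n) fun _ => Iff.rfl).symm.trans
      Equiv.subtypeSum
  have : Finite (_ ⊕ _) := Finite.of_equiv _ e
  have := Finite.sum_left (α := {a : {a // p a} // w a = n}) {a : {a // ¬p a} // w a = n}
  have := Finite.sum_right {a : {a // p a} // w a = n} (β := {a : {a // ¬p a} // w a = n})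
  rw [← Nat.cast_add, ← Nat.card_sum, Nat.card_congr e]

def prodFiberEquiv (v : α → ℕ) (w : β → ℕ) (n : ℕ) :
    {x : α × β // v x.1 + w x.2 = n} ≃
      Σ ij : antidiagonal n, {a // v a = ij.1.1} × {b // w b = ij.1.2} where
  toFun x := ⟨⟨(v x.1.1, w x.1.2), mem_antidiagonal.2 x.2⟩, ⟨x.1.1, rfl⟩, ⟨x.1.2, rfl⟩⟩
  invFun y := ⟨(y.2.1, y.2.2), by rw [y.2.1.2, y.2.2.2]; exact mem_antidiagonal.1 y.1.2⟩
  left_inv _ := rfl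
  right_inv := by
    rintro ⟨⟨⟨i, j⟩, h⟩, ⟨a, ha : v a = i⟩, ⟨b, hb : w b = j⟩⟩
    subst ha hb
    rfl

theorem weightSeries_prod (v : α → ℕ) (w : β → ℕ) [∀ n, Finite {a // v a = n}]
    [∀ n, Finite {b // w b = n}] :
    weightSeries R (fun x : α × β => v x.1 + w x.2) = weightSeries R v * weightSeries R w := by
  ext n
  rw [coeff_weightSeries, coeff_mul, Nat.card_congr (prodFiberEquiv v w n), Nat.card_sigma,
    ← Finset.sum_coe_sort (antidiagonal n)]
  push_cast [Nat.card_prod, coeff_weightSeries]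
  rfl

end WeightSeries

noncomputable def multisetSeries (r : ℕ) : ℚ⟦X⟧ :=
  weightSeries ℚ fun s : Sym ℕ r => (s : Multiset ℕ).sum

instance finite_sym_sum_eq (r n : ℕ) : Finite {s : Sym ℕ r // (s : Multiset ℕ).sum = n} := by
  refine Finite.of_injective (β := (range (n + 1)).sym r)
    (fun s => ⟨s.1, mem_sym_iff.2 fun a ha => mem_range.2 ?_⟩) fun s t h => ?_
  · exact Nat.lt_succ_of_le (s.2 ▸ Multiset.le_sum_of_mem ha)
  · exact Subtype.ext (by simpa using h)

def symConsZeroEquiv (r : ℕ) : Sym ℕ r ≃ {s : Sym ℕ (r + 1) // 0 ∈ s} where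
  toFun s := ⟨0 ::ₛ s, Sym.mem_cons_self 0 s⟩
  invFun s := s.1.erase 0 s.2
  left_inv s := Sym.erase_cons_head s 0
  right_inv s := Subtype.ext (Sym.cons_erase s.2)

def symMapSuccEquiv (r : ℕ) : Sym ℕ r ≃ {s : Sym ℕ r // 0 ∉ s} where
  toFun s := ⟨s.map Nat.succ, fun h => by simp [Sym.mem_map] at h⟩
  invFun s := s.1.map Nat.pred
  left_inv s := by simp [Sym.map_map]
  right_inv s := by
    ext1
    simp only [Sym.map_map]
    refine (Sym.map_congr fun a ha => ?_).trans (Sym.map_id' _)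
    exact Nat.succ_pred (ne_of_mem_of_not_mem ha s.2)

theorem multisetSeries_zero : multisetSeries 0 = 1 := by
  ext n
  have hsum (s : Sym ℕ 0) : (s : Multiset ℕ).sum = 0 := by simp [Sym.eq_nil_of_card_zero s]
  rw [multisetSeries, coeff_weightSeries, coeff_one]
  split_ifs with hn
  · subst hn
    rw [Nat.card_congr (Equiv.subtypeUnivEquiv hsum), Nat.card_unique, Nat.cast_one]
  · have : IsEmpty {s : Sym ℕ 0 // (s : Multiset ℕ).sum = n} := ⟨fun s => hn (s.2 ▸ hsum s)⟩
    simp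

theorem multisetSeries_succ (r : ℕ) :
    multisetSeries (r + 1) = multisetSeries r + X ^ (r + 1) * multisetSeries (r + 1) := by
  conv_lhs => rw [multisetSeries, weightSeries_eq_add_compl _ (0 ∈ ·)]
  congr 1
  · exact (weightSeries_congr (symConsZeroEquiv r) fun s => by
      simp [symConsZeroEquiv, Sym.coe_cons]).symm
  · rw [multisetSeries, ← weightSeries_add_const]
    refine (weightSeries_congr (symMapSuccEquiv (r + 1)) fun s => ?_).symm
    simp [symMapSuccEquiv, Sym.coe_map, Multiset.sum_map_add, add_comm]

theorem qPoch_succ (r : ℕ) : qPoch (r + 1) = qPoch r * (1 - X ^ (r + 1)) :=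
  prod_range_succ _ r

theorem qPoch_mul_multisetSeries (r : ℕ) : qPoch r * multisetSeries r = 1 := by
  induction r with
  | zero => simp [qPoch, multisetSeries_zero]
  | succ r ih =>
    rw [qPoch_succ]
    linear_combination ih + qPoch r * multisetSeries_succ r

theorem inv_qPoch (r : ℕ) : (qPoch r)⁻¹ = multisetSeries r := by
  rw [PowerSeries.inv_eq_iff_mul_eq_one (by simp [qPoch, map_prod]), mul_comm,
    qPoch_mul_multisetSeries]

theorem X_pow_succ_dvd_multisetSeries_sub {m n : ℕ} (h : m ≤ n) :
    X ^ (m + 1) ∣ multisetSeries n - multisetSeries m := by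
  induction n, h using Nat.le_induction with
  | base => simp
  | succ n _ ih =>
    rw [show multisetSeries (n + 1) - multisetSeries m
        = multisetSeries n - multisetSeries m + X ^ (n + 1) * multisetSeries (n + 1) by
      linear_combination multisetSeries_succ n]
    exact dvd_add ih (dvd_mul_of_dvd_left (pow_dvd_pow X (by omega)) _)

theorem sum_range_X_pow_mul_multisetSeries (n : ℕ) :
    ∑ i ∈ range (n + 1), X ^ i * multisetSeries i = multisetSeries n := by
  induction n with
  | zero => simp [multisetSeries_zero]
  | succ n ih => rw [sum_range_succ, ih, ← multisetSeries_succ]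

noncomputable def qBinom : ℕ → ℕ → ℚ⟦X⟧
  | _, 0 => 1
  | 0, _ + 1 => 0
  | n + 1, k + 1 => qBinom n k + X ^ (k + 1) * qBinom n (k + 1)

@[simp] theorem qBinom_zero_right (n : ℕ) : qBinom n 0 = 1 := by cases n <;> rfl

theorem qBinom_succ_succ (n k : ℕ) :
    qBinom (n + 1) (k + 1) = qBinom n k + X ^ (k + 1) * qBinom n (k + 1) := rfl

theorem qBinom_eq_zero_of_lt {n k : ℕ} (h : n < k) : qBinom n k = 0 := by
  induction n generalizing k with
  | zero => obtain ⟨k, rfl⟩ := Nat.exists_eq_succ_of_ne_zero h.ne'; rfl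
  | succ n ih =>
    obtain ⟨k, rfl⟩ := Nat.exists_eq_succ_of_ne_zero (Nat.ne_zero_of_lt h)
    rw [qBinom_succ_succ, ih (by omega), ih (by omega), mul_zero, add_zero]

@[simp] theorem qBinom_self (n : ℕ) : qBinom n n = 1 := by
  induction n with
  | zero => rfl
  | succ n ih =>
    rw [qBinom_succ_succ, ih, qBinom_eq_zero_of_lt n.lt_succ_self, mul_zero, add_zero]

theorem qBinom_add_mul_qPoch_mul_qPoch (i j : ℕ) :
    qBinom (i + j) i * qPoch i * qPoch j = qPoch (i + j) := by
  induction i generalizing j with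
  | zero => simp [qPoch]
  | succ i ih =>
    induction j with
    | zero => simp [qPoch]
    | succ j ihj =>
      have h := ih (j + 1)
      rw [show i + 1 + j = i + (j + 1) by omega, qPoch_succ i] at ihj
      rw [qPoch_succ j] at h
      rw [show i + 1 + (j + 1) = i + (j + 1) + 1 by omega, qBinom_succ_succ,
        qPoch_succ (i + (j + 1)), qPoch_succ i, qPoch_succ j]
      linear_combination (1 - X ^ (i + 1)) * h + X ^ (i + 1) * (1 - X ^ (j + 1)) * ihj

theorem qBinom_add_mul_multisetSeries (i j : ℕ) :
    qBinom (i + j) i * multisetSeries (i + j) = multisetSeries i * multisetSeries j := by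
  linear_combination multisetSeries i * multisetSeries j * multisetSeries (i + j) *
      qBinom_add_mul_qPoch_mul_qPoch i j +
    multisetSeries i * multisetSeries j * qPoch_mul_multisetSeries (i + j) -
    qBinom (i + j) i * multisetSeries (i + j) * qPoch j * multisetSeries j *
      qPoch_mul_multisetSeries i -
    qBinom (i + j) i * multisetSeries (i + j) * qPoch_mul_multisetSeries j

/-- A `q`-Chu–Vandermonde sum; the shift `a` makes the induction on `n` go through, since Pascal's
rule and a telescoping sum reduce `(n + 1, a)` to `(n, a + 1)`. -/
theorem sum_range_X_pow_mul_qBinom_mul_multisetSeries (n a : ℕ) :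
    ∑ k ∈ range (n + 1), X ^ (k * k + a * k) * qBinom n k * multisetSeries (k + a) =
      multisetSeries (n + a) := by
  induction n generalizing a with
  | zero => simp
  | succ n ih =>
    let g (k : ℕ) : ℚ⟦X⟧ := X ^ (k * k + (a + 1) * k) * qBinom n k * multisetSeries (k + a)
    have step (k : ℕ) :
        X ^ ((k + 1) * (k + 1) + a * (k + 1)) * qBinom (n + 1) (k + 1) *
            multisetSeries (k + 1 + a)
          = X ^ (k * k + (a + 1) * k) * qBinom n k * multisetSeries (k + (a + 1)) +
            (g (k + 1) - g k) := by
      simp only [g, qBinom_succ_succ]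
      rw [show k + (a + 1) = k + a + 1 by omega, show k + 1 + a = k + a + 1 by omega]
      linear_combination -(X ^ (k * k + (a + 1) * k) * qBinom n k) * multisetSeries_succ (k + a)
    rw [sum_range_succ', sum_congr rfl fun k _ => step k, sum_add_distrib, sum_range_sub,
      ih (a + 1), show n + (a + 1) = n + 1 + a by omega]
    simp [g, qBinom_eq_zero_of_lt]

/-- The Durfee-square decomposition. -/
theorem multisetSeries_mul_self (r : ℕ) :
    multisetSeries r * multisetSeries r =
      ∑ k ∈ range (r + 1),
        X ^ (k * k) * multisetSeries k * (multisetSeries k * multisetSeries (r - k)) := by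
  have h := sum_range_X_pow_mul_qBinom_mul_multisetSeries r 0
  simp only [zero_mul, add_zero] at h
  nth_rewrite 1 [← h]
  rw [sum_mul]
  refine sum_congr rfl fun k hk => ?_
  obtain ⟨j, rfl⟩ := Nat.exists_eq_add_of_le (Nat.lt_succ_iff.1 (mem_range.1 hk))
  rw [Nat.add_sub_cancel_left, ← qBinom_add_mul_multisetSeries]
  ring

theorem sum_range_X_pow_mul_multisetSeries_mul_self (n : ℕ) :
    ∑ r ∈ range (n + 1), X ^ r * (multisetSeries r * multisetSeries r) =
      ∑ k ∈ range (n + 1),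
        X ^ (k * k + k) * (multisetSeries k * multisetSeries k) * multisetSeries (n - k) := by
  calc _ = ∑ r ∈ range (n + 1), ∑ k ∈ range (r + 1),
          X ^ (k * k + k) * (multisetSeries k * multisetSeries k) *
            (X ^ (r - k) * multisetSeries (r - k)) := by
        refine sum_congr rfl fun r _ => ?_
        rw [multisetSeries_mul_self, mul_sum]
        refine sum_congr rfl fun k hk => ?_
        obtain ⟨j, rfl⟩ := Nat.exists_eq_add_of_le (Nat.lt_succ_iff.1 (mem_range.1 hk))
        rw [Nat.add_sub_cancel_left]
        ring
    _ = ∑ k ∈ range (n + 1), ∑ i ∈ range (n + 1 - k),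
          X ^ (k * k + k) * (multisetSeries k * multisetSeries k) * (X ^ i * multisetSeries i) :=
        sum_range_diag_flip (n + 1) fun k i =>
          X ^ (k * k + k) * (multisetSeries k * multisetSeries k) * (X ^ i * multisetSeries i)
    _ = _ := by
        refine sum_congr rfl fun k hk => ?_
        rw [← mul_sum, show n + 1 - k = n - k + 1 by have := mem_range.1 hk; omega,
          sum_range_X_pow_mul_multisetSeries]

theorem coeff_X_pow_mul_mul_multisetSeries {k m n N : ℕ} (hmn : m ≤ n) (hN : N ≤ k + m)
    (f : ℚ⟦X⟧) :
    coeff N (X ^ k * f * multisetSeries n) = coeff N (X ^ k * f * multisetSeries m) := by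
  rw [← sub_eq_zero, ← map_sub, ← mul_sub]
  refine X_pow_dvd_iff.1 ?_ N N.lt_succ_self
  calc X ^ (N + 1) ∣ X ^ k * X ^ (m + 1) := by rw [← pow_add]; exact pow_dvd_pow X (by omega)
    _ ∣ X ^ k * f * (multisetSeries n - multisetSeries m) :=
      mul_dvd_mul (dvd_mul_right _ _) (X_pow_succ_dvd_multisetSeries_sub hmn)

def dimM0Equiv (N : ℕ) :
    {p : Multiset ℕ × Multiset ℕ // Multiset.card p.1 = Multiset.card p.2 ∧
      p.1.sum + p.2.sum + Multiset.card p.1 = N} ≃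
    Σ r : Fin (N + 1), {p : Sym ℕ r × Sym ℕ r //
      (p.1 : Multiset ℕ).sum + (p.2 : Multiset ℕ).sum = N - r} where
  toFun p := ⟨⟨Multiset.card p.1.1, by have := p.2.2; omega⟩,
    ⟨(⟨p.1.1, rfl⟩, ⟨p.1.2, p.2.1.symm⟩), Nat.eq_sub_of_add_eq p.2.2⟩⟩
  invFun x := ⟨((x.2.1.1 : Multiset ℕ), (x.2.1.2 : Multiset ℕ)),
    x.2.1.1.2.trans x.2.1.2.2.symm, by
      dsimp only
      rw [Sym.card_coe]
      have := x.2.2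
      have := x.1.2
      omega⟩
  left_inv _ := rfl
  right_inv := by
    rintro ⟨⟨r, hr⟩, ⟨⟨A, hA : Multiset.card A = r⟩, B⟩, h⟩
    subst hA
    rfl

theorem dimM0_eq_coeff (N : ℕ) :
    (dimM0 N : ℚ) =
      coeff N (∑ r ∈ range (N + 1), X ^ r * (multisetSeries r * multisetSeries r)) := by
  have (r : Fin (N + 1)) :
      Finite {p : Sym ℕ r × Sym ℕ r //
        (p.1 : Multiset ℕ).sum + (p.2 : Multiset ℕ).sum = N - r} :=
    Finite.of_equiv _ (prodFiberEquiv (fun s : Sym ℕ r => (s : Multiset ℕ).sum)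
      (fun s : Sym ℕ r => (s : Multiset ℕ).sum) (N - r)).symm
  rw [dimM0, Nat.card_congr (dimM0Equiv N), Nat.card_sigma, Nat.cast_sum, map_sum,
    Fin.sum_univ_eq_sum_range (fun r => (Nat.card {p : Sym ℕ r × Sym ℕ r //
      (p.1 : Multiset ℕ).sum + (p.2 : Multiset ℕ).sum = N - r} : ℚ))]
  refine sum_congr rfl fun r hr => ?_
  rw [coeff_X_pow_mul', if_pos (Nat.lt_succ_iff.1 (mem_range.1 hr)), multisetSeries,
    ← weightSeries_prod, coeff_weightSeries]

theorem hilbert_series_M0 (N : ℕ) :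
    (dimM0 N : ℚ)
      = PowerSeries.coeff (R := ℚ) N
          ((qPoch (N + 1))⁻¹ *
            ∑ k ∈ Finset.range (N + 1),
              (PowerSeries.X : PowerSeries ℚ) ^ (k ^ 2 + k) * ((qPoch k)⁻¹) ^ 2) := by
  simp only [inv_qPoch]
  rw [dimM0_eq_coeff, sum_range_X_pow_mul_multisetSeries_mul_self, mul_sum, map_sum, map_sum]
  refine sum_congr rfl fun k hk => ?_
  rw [← coeff_X_pow_mul_mul_multisetSeries (n := N + 1) (by omega)
    (by have := mem_range.1 hk; omega)]
  ring_nf
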